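/- Let F be a field, V an infinite-dimensional F-vector space, V* its dual, V̄ = V ⊕ V*, and f the alternating bilinear form on V̄ given by f((a,α),(b,β)) = α(b) − β(a). Let W be a totally f-isotropic subspace of V̄, let P₁ ≤ V and P₂ ≤ V* be the images of W under the projections onto V and onto V*. Then W is a generator of S_f (i.e. maximal among totally f-isotropic subspaces of V̄) if and only if both: {α ∈ V* : α(x) = 0 for all x ∈ P₁} = {α ∈ V* : (0,α) ∈ W}, and {x ∈ V : α(x) = 0 for all α ∈ P₂} = {x ∈ V : (x,0) ∈ W}. -/
import Mathlib


/-- The symplectic form `f((a,α),(b,β)) = α(b) − β(a)` on `V̄ = V ⊕ V*`. -/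
def symForm {F V : Type*} [Field F] [AddCommGroup V] [Module F V]
    (p q : V × Module.Dual F V) : F :=
  p.2 q.1 - q.2 p.1

/-- A subspace of `V̄` is totally `f`-isotropic. -/
def SymTotIso {F V : Type*} [Field F] [AddCommGroup V] [Module F V]
    (W : Submodule F (V × Module.Dual F V)) : Prop :=
  ∀ x ∈ W, ∀ y ∈ W, symForm x y = 0

/-- A generator of the symplectic polar space `S_f`: a maximal totally
`f`-isotropic subspace of `V̄`. -/
def SymGen {F V : Type*} [Field F] [AddCommGroup V] [Module F V]
    (W : Submodule F (V × Module.Dual F V)) : Prop :=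
  SymTotIso W ∧
    ∀ W' : Submodule F (V × Module.Dual F V), SymTotIso W' → W ≤ W' → W' = W

section Aux

variable {F V : Type*} [Field F] [AddCommGroup V] [Module F V]

lemma symForm_add_left (p q r : V × Module.Dual F V) :
    symForm (p + q) r = symForm p r + symForm q r := by
  simp [symForm]; ring

lemma symForm_smul_left (c : F) (p r : V × Module.Dual F V) :
    symForm (c • p) r = c * symForm p r := by
  simp [symForm]; ring

lemma symForm_sub_right (p q r : V × Module.Dual F V) :
    symForm p (q - r) = symForm p q - symForm p r := by
  simp [symForm]; ring

lemma symForm_self (p : V × Module.Dual F V) : symForm p p = 0 := by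
  simp [symForm]

lemma symForm_neg_swap (p q : V × Module.Dual F V) : symForm p q = - symForm q p := by
  unfold symForm; ring

/-- If `v` is `f`-orthogonal to all of a maximal totally isotropic `W`, then `v ∈ W`. -/
lemma mem_of_perp (W : Submodule F (V × Module.Dual F V)) (hW : SymTotIso W)
    (hmax : ∀ W' : Submodule F (V × Module.Dual F V), SymTotIso W' → W ≤ W' → W' = W)
    (v : V × Module.Dual F V) (hv : ∀ w ∈ W, symForm w v = 0) : v ∈ W := by
  have hiso : SymTotIso (W ⊔ Submodule.span F {v}) := by
    intro x hx y hy
    rw [Submodule.mem_sup] at hx hy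
    obtain ⟨w₁, hw₁, s₁, hs₁, rfl⟩ := hx
    obtain ⟨w₂, hw₂, s₂, hs₂, rfl⟩ := hy
    obtain ⟨c₁, rfl⟩ := Submodule.mem_span_singleton.mp hs₁
    obtain ⟨c₂, rfl⟩ := Submodule.mem_span_singleton.mp hs₂
    have h1 : symForm w₁ (w₂ + c₂ • v) = 0 := by
      rw [show symForm w₁ (w₂ + c₂ • v) = - symForm (w₂ + c₂ • v) w₁ from
        symForm_neg_swap _ _, symForm_add_left, symForm_smul_left]
      rw [hW w₂ hw₂ w₁ hw₁, show symForm v w₁ = - symForm w₁ v from symForm_neg_swap _ _,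
        hv w₁ hw₁]
      ring
    have h2 : symForm v (w₂ + c₂ • v) = 0 := by
      rw [show symForm v (w₂ + c₂ • v) = - symForm (w₂ + c₂ • v) v from symForm_neg_swap _ _,
        symForm_add_left, symForm_smul_left, hv w₂ hw₂, symForm_self]
      ring
    rw [symForm_add_left, symForm_smul_left, h1, h2]
    ring
  have heq := hmax _ hiso le_sup_left
  have : v ∈ W ⊔ Submodule.span F {v} :=
    Submodule.mem_sup_right (Submodule.mem_span_singleton_self v)
  rwa [heq] at this

end Aux

/-- A totally isotropic subspace `W` of `V̄ = V ⊕ V*` is a generator of `S_f` iff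
`ker*(P₁) = W ∩ V*` and `ker(P₂) = W ∩ V`, where `P₁, P₂` are the projections of `W`. -/
theorem stmt_7 {F V : Type*} [Field F] [AddCommGroup V] [Module F V]
    (hV : ¬ Module.Finite F V)
    (W : Submodule F (V × Module.Dual F V)) (hW : SymTotIso W) :
    SymGen W ↔
      ({α : Module.Dual F V |
          ∀ x ∈ Submodule.map (LinearMap.fst F V (Module.Dual F V)) W, α x = 0} =
        {α : Module.Dual F V | ((0 : V), α) ∈ W} ∧
       {x : V |
          ∀ α ∈ Submodule.map (LinearMap.snd F V (Module.Dual F V)) W, α x = 0} =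
        {x : V | (x, (0 : Module.Dual F V)) ∈ W}) := by
  constructor
  · rintro ⟨hiso, hmax⟩
    constructor
    · ext α
      simp only [Set.mem_setOf_eq]
      constructor
      · intro h
        refine mem_of_perp W hiso hmax (0, α) ?_
        rintro ⟨a, α'⟩ haW
        have ha : a ∈ Submodule.map (LinearMap.fst F V (Module.Dual F V)) W :=
          ⟨(a, α'), haW, rfl⟩
        simp [symForm, h a ha]
      · intro h x hx
        obtain ⟨⟨a, α'⟩, haW, rfl⟩ := hx
        have := hiso _ h _ haW
        simpa [symForm] using this
    · ext x
      simp only [Set.mem_setOf_eq]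
      constructor
      · intro h
        refine mem_of_perp W hiso hmax (x, 0) ?_
        rintro ⟨a, α⟩ haW
        have hα : α ∈ Submodule.map (LinearMap.snd F V (Module.Dual F V)) W :=
          ⟨(a, α), haW, rfl⟩
        simp [symForm, h α hα]
      · intro h α hα
        obtain ⟨⟨a, α'⟩, haW, rfl⟩ := hα
        have := hiso _ haW _ h
        simpa [symForm] using this
  · rintro ⟨h1, h2⟩
    refine ⟨hW, fun W' hW' hle => ?_⟩
    refine le_antisymm (fun v hv => ?_) hle
    obtain ⟨b, β⟩ := v
    have hperp : ∀ w ∈ W, symForm w (b, β) = 0 := fun w hw => hW' w (hle hw) _ hv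
    -- first: b ∈ P₁
    set P₁ := Submodule.map (LinearMap.fst F V (Module.Dual F V)) W with hP₁
    have hb : b ∈ P₁ := by
      rw [← @Subspace.dualAnnihilator_dualCoannihilator_eq F V _ _ _ P₁,
        Submodule.mem_dualCoannihilator]
      intro φ hφ
      rw [Submodule.mem_dualAnnihilator] at hφ
      have : ((0 : V), φ) ∈ W := by
        have : φ ∈ {α : Module.Dual F V | ∀ x ∈ P₁, α x = 0} := hφ
        rw [h1] at this
        exact this
      have := hperp _ this
      simpa [symForm] using this
    obtain ⟨⟨b', α₀⟩, hb'W, hb'⟩ := hb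
    simp only [LinearMap.fst_apply] at hb'
    subst hb'
    -- now (0, β - α₀) ∈ W
    have hmem : ((0 : V), β - α₀) ∈ W := by
      have : (β - α₀) ∈ {α : Module.Dual F V | ∀ x ∈ P₁, α x = 0} := by
        rintro x ⟨⟨a, α⟩, haW, rfl⟩
        have e1 := hperp _ haW
        have e2 := hW _ haW _ hb'W
        simp only [symForm] at e1 e2 ⊢
        simp only [LinearMap.sub_apply]
        simp only [LinearMap.fst_apply]
        linear_combination e2 - e1
      rw [h1] at this
      exact this
    have : ((b', β) : V × Module.Dual F V) = (b', α₀) + (0, β - α₀) := by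
      ext <;> simp
    rw [this]
    exact W.add_mem hb'W hmem
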